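/- arXiv:2406.07407 — 11 statements merged into one kernel-verified Lean document; each statement's English description precedes it below -/
import Mathlib

section
/- Let n ∈ ℕ, let x₁,…,xₙ ∈ ℝ^d, and let F(θ) = Σᵢ ‖θ - xᵢ‖₂. Fix θ₀, θ₁ ∈ ℝ^d, γ ∈ (1/2, 1], and ζ ≥ 0 with F(θ₁) - F(θ₀) ≤ ζ·n. Let Δ = Δ_{γn}(θ₀) be the smallest radius r such that at least γn of the points xᵢ satisfy ‖xᵢ - θ₀‖ ≤ r. Then (2γ - 1)·‖θ₁ - θ₀‖ - 2γ·Δ ≤ ζ. -/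
open Finset

/-- Geometric-median growth lemma: if `F θ₁ - F θ₀ ≤ ζ n` and `Δ` is the `γ`-quantile
radius of the dataset around `θ₀`, then `(2γ-1)‖θ₁-θ₀‖ - 2γΔ ≤ ζ`. -/
theorem stmt_0 (d n : ℕ) (hn : 0 < n) (x : Fin n → EuclideanSpace ℝ (Fin d))
    (θ₀ θ₁ : EuclideanSpace ℝ (Fin d)) (γ ζ Δ : ℝ)
    (hγ : γ ∈ Set.Ioc (1/2 : ℝ) 1) (hζ : 0 ≤ ζ)
    (hΔ : IsLeast {r : ℝ | 0 ≤ r ∧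
        γ * n ≤ ((univ.filter fun i => ‖x i - θ₀‖ ≤ r).card : ℝ)} Δ)
    (hF : (∑ i, ‖θ₁ - x i‖) - (∑ i, ‖θ₀ - x i‖) ≤ ζ * n) :
    (2 * γ - 1) * ‖θ₁ - θ₀‖ - 2 * γ * Δ ≤ ζ := by
  obtain ⟨⟨hΔ0, hcard⟩, _⟩ := hΔ
  set D := ‖θ₁ - θ₀‖ with hDdef
  have hD0 : 0 ≤ D := norm_nonneg _
  have hγ1 : (1:ℝ)/2 < γ := hγ.1
  have hγ2 : γ ≤ 1 := hγ.2
  rcases le_or_gt D Δ with hcase | hcase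
  · nlinarith
  · set S := univ.filter fun i => ‖x i - θ₀‖ ≤ Δ with hS
    have hSsub : S ⊆ univ := subset_univ S
    have hScard : (S.card : ℝ) ≤ n := by
      exact_mod_cast Nat.cast_le.mpr (le_trans (card_le_card hSsub) (by simp))
    have htri : ∀ i, D ≤ ‖θ₁ - x i‖ + ‖x i - θ₀‖ := by
      intro i
      calc D = ‖(θ₁ - x i) + (x i - θ₀)‖ := by rw [hDdef]; congr 1; abel
        _ ≤ ‖θ₁ - x i‖ + ‖x i - θ₀‖ := norm_add_le _ _
    have hrev : ∀ i, ‖θ₀ - x i‖ = ‖x i - θ₀‖ := fun i => norm_sub_rev _ _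
    have hlow : ∀ i : Fin n, -D ≤ ‖θ₁ - x i‖ - ‖θ₀ - x i‖ := by
      intro i
      have : ‖θ₀ - x i‖ ≤ ‖θ₀ - θ₁‖ + ‖θ₁ - x i‖ := by
        calc ‖θ₀ - x i‖ = ‖(θ₀ - θ₁) + (θ₁ - x i)‖ := by congr 1; abel
          _ ≤ ‖θ₀ - θ₁‖ + ‖θ₁ - x i‖ := norm_add_le _ _
      have hrev2 : ‖θ₀ - θ₁‖ = D := by rw [hDdef, norm_sub_rev]
      linarith
    have hSlow : ∀ i ∈ S, D - 2*Δ ≤ ‖θ₁ - x i‖ - ‖θ₀ - x i‖ := by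
      intro i hi
      rw [hS, mem_filter] at hi
      have h2 := hi.2
      have := htri i
      rw [hrev i]
      linarith
    have hsum : (S.card : ℝ) * (D - 2*Δ) + ((n : ℝ) - S.card) * (-D)
        ≤ (∑ i, ‖θ₁ - x i‖) - (∑ i, ‖θ₀ - x i‖) := by
      have hsplit : (∑ i, ‖θ₁ - x i‖) - (∑ i, ‖θ₀ - x i‖)
          = ∑ i ∈ S, (‖θ₁ - x i‖ - ‖θ₀ - x i‖) + ∑ i ∈ Sᶜ, (‖θ₁ - x i‖ - ‖θ₀ - x i‖) := by
        rw [Finset.sum_add_sum_compl S (fun i => ‖θ₁ - x i‖ - ‖θ₀ - x i‖),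
          Finset.sum_sub_distrib]
      rw [hsplit]
      have h1 : (S.card : ℝ) * (D - 2*Δ) ≤ ∑ i ∈ S, (‖θ₁ - x i‖ - ‖θ₀ - x i‖) := by
        calc (S.card : ℝ) * (D - 2*Δ) = ∑ _i ∈ S, (D - 2*Δ) := by
              rw [Finset.sum_const, nsmul_eq_mul]
          _ ≤ _ := Finset.sum_le_sum hSlow
      have h2 : ((n : ℝ) - S.card) * (-D) ≤ ∑ i ∈ Sᶜ, (‖θ₁ - x i‖ - ‖θ₀ - x i‖) := by
        have hcc : ((Sᶜ : Finset (Fin n)).card : ℝ) = (n : ℝ) - S.card := by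
          rw [Finset.card_compl]
          have := card_le_card hSsub
          simp only [Fintype.card_fin]
          rw [Nat.cast_sub (by simpa using this)]
        calc ((n : ℝ) - S.card) * (-D) = ∑ _i ∈ Sᶜ, (-D) := by
              rw [Finset.sum_const, nsmul_eq_mul, hcc]
          _ ≤ _ := Finset.sum_le_sum (fun i _ => hlow i)
      linarith
    have hn' : (0:ℝ) < n := by exact_mod_cast hn
    have key : (n:ℝ) * ((2*γ-1)*D - 2*γ*Δ) ≤ ζ * n := by
      refine le_trans ?_ hF
      refine le_trans ?_ hsum
      nlinarith [hcard, hcase, hScard]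
    nlinarith [key, hn']
end

section
/- Let n ∈ ℕ, k < n/2, and points x₁,…,xₙ, y₁,…,y_k ∈ ℝ^d. Let θ₀ be a geometric median of (x₁,…,xₙ) and θ_k a geometric median of (x₁,…,x_{n-k}, y₁,…,y_k). Then ‖θ_k - θ₀‖ ≤ (2/(n - 2k)) · Σ_{i=1}^n ‖θ₀ - xᵢ‖. -/
open Finset

/-- Stability of the geometric median to replacing `k < n/2` points. -/
theorem stmt_1 (d n k : ℕ) (hk : 2 * k < n)
    (x : Fin n → EuclideanSpace ℝ (Fin d)) (y : Fin k → EuclideanSpace ℝ (Fin d))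
    (θ₀ θk : EuclideanSpace ℝ (Fin d))
    (h0 : IsMinOn (fun θ => ∑ i, ‖θ - x i‖) Set.univ θ₀)
    (hkmin : IsMinOn (fun θ =>
        (∑ i : Fin (n - k), ‖θ - x (Fin.castLE (Nat.sub_le n k) i)‖) + ∑ j, ‖θ - y j‖)
      Set.univ θk) :
    ‖θk - θ₀‖ ≤ 2 / ((n : ℝ) - 2 * k) * ∑ i, ‖θ₀ - x i‖ := by
  set Δ := ‖θk - θ₀‖ with hΔ
  have hG := isMinOn_iff.mp hkmin θ₀ (Set.mem_univ _)
  -- lower bounds via triangle inequality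
  have h1 : ∀ i : Fin (n - k), Δ - ‖θ₀ - x (Fin.castLE (Nat.sub_le n k) i)‖
      ≤ ‖θk - x (Fin.castLE (Nat.sub_le n k) i)‖ := by
    intro i
    have : Δ ≤ ‖θk - x (Fin.castLE (Nat.sub_le n k) i)‖ + ‖θ₀ - x (Fin.castLE (Nat.sub_le n k) i)‖ := by
      calc Δ = ‖(θk - x (Fin.castLE (Nat.sub_le n k) i)) - (θ₀ - x (Fin.castLE (Nat.sub_le n k) i))‖ := by
              rw [sub_sub_sub_cancel_right]
        _ ≤ _ := norm_sub_le _ _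
    linarith
  have h2 : ∀ j : Fin k, ‖θ₀ - y j‖ - Δ ≤ ‖θk - y j‖ := by
    intro j
    have : ‖θ₀ - y j‖ ≤ ‖θ₀ - θk‖ + ‖θk - y j‖ := by
      calc ‖θ₀ - y j‖ = ‖(θ₀ - θk) + (θk - y j)‖ := by rw [sub_add_sub_cancel]
        _ ≤ _ := norm_add_le _ _
    rw [norm_sub_rev θ₀ θk] at this
    linarith
  set A := ∑ i : Fin (n - k), ‖θ₀ - x (Fin.castLE (Nat.sub_le n k) i)‖ with hA
  set B := ∑ j : Fin k, ‖θ₀ - y j‖ with hB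
  have hsum1 : (n - k : ℕ) * Δ - A ≤ ∑ i : Fin (n - k), ‖θk - x (Fin.castLE (Nat.sub_le n k) i)‖ := by
    have := Finset.sum_le_sum (s := Finset.univ) (fun i _ => h1 i)
    simpa [Finset.sum_sub_distrib, Finset.card_univ, mul_comm] using this
  have hsum2 : B - (k : ℕ) * Δ ≤ ∑ j : Fin k, ‖θk - y j‖ := by
    have := Finset.sum_le_sum (s := Finset.univ) (fun j _ => h2 j)
    simpa [Finset.sum_sub_distrib, Finset.card_univ, mul_comm] using this
  have key : ((n - k : ℕ) : ℝ) * Δ - (k : ℝ) * Δ ≤ 2 * A := by linarith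
  have hcast : ((n - k : ℕ) : ℝ) = (n : ℝ) - k := by
    have hkn : k ≤ n := by omega
    push_cast [hkn]; ring
  have hAS : A ≤ ∑ i, ‖θ₀ - x i‖ := by
    rw [hA]
    have : ∑ i : Fin (n - k), ‖θ₀ - x (Fin.castLE (Nat.sub_le n k) i)‖
        = ∑ i ∈ Finset.univ.map ⟨Fin.castLE (Nat.sub_le n k), Fin.castLE_injective _⟩, ‖θ₀ - x i‖ := by
      rw [Finset.sum_map]; rfl
    rw [this]
    exact Finset.sum_le_sum_of_subset_of_nonneg (Finset.subset_univ _)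
      (fun i _ _ => norm_nonneg _)
  have hpos : (0 : ℝ) < (n : ℝ) - 2 * k := by
    have : (2 * k : ℝ) < n := by exact_mod_cast hk
    linarith
  rw [div_mul_eq_mul_div, le_div_iff₀ hpos]
  rw [hcast] at key
  nlinarith [norm_nonneg (θk - θ₀)]
end

section
/- Let (x₁,…,xₙ) ∈ (ℝ^d)^n with geometric median θ⋆, and let B ⊆ [n] with |B| < n/2. Then for every θ ∈ ℝ^d, ‖θ - θ⋆‖ ≤ ((2n - 2|B|)/(n - 2|B|)) · max_{i ∉ B} ‖θ - xᵢ‖. -/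
open Finset

/-- Robustness of the geometric median: distance to any `θ` is controlled by the
largest distance from `θ` to the points outside a minority set `B`. -/
theorem stmt_2 (d n : ℕ) (x : Fin n → EuclideanSpace ℝ (Fin d))
    (θs : EuclideanSpace ℝ (Fin d))
    (hθs : IsMinOn (fun θ => ∑ i, ‖θ - x i‖) Set.univ θs)
    (B : Finset (Fin n)) (hB : 2 * B.card < n) (hne : (Bᶜ : Finset (Fin n)).Nonempty)
    (θ : EuclideanSpace ℝ (Fin d)) :
    ‖θ - θs‖ ≤ (2 * (n : ℝ) - 2 * B.card) / ((n : ℝ) - 2 * B.card) *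
      (Bᶜ.sup' hne fun i => ‖θ - x i‖) := by
  set r := Bᶜ.sup' hne fun i => ‖θ - x i‖ with hrdef
  set D := ‖θ - θs‖ with hDdef
  obtain ⟨j, hj⟩ := hne
  have hr0 : (0:ℝ) ≤ r := le_trans (norm_nonneg _) (Finset.le_sup' (fun i => ‖θ - x i‖) hj)
  have h1 : ∑ i, ‖θs - x i‖ ≤ ∑ i, ‖θ - x i‖ := hθs (Set.mem_univ θ)
  have hsplit : ∀ y : EuclideanSpace ℝ (Fin d),
      ∑ i, ‖y - x i‖ = ∑ i ∈ B, ‖y - x i‖ + ∑ i ∈ Bᶜ, ‖y - x i‖ :=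
    fun y => (Finset.sum_add_sum_compl B _).symm
  -- bound on B
  have hBbound : ∑ i ∈ B, ‖θ - x i‖ - B.card * D ≤ ∑ i ∈ B, ‖θs - x i‖ := by
    have h : ∀ i ∈ B, ‖θ - x i‖ - D ≤ ‖θs - x i‖ := by
      intro i _
      have he : θs - x i = (θ - x i) - (θ - θs) := by abel
      rw [he]
      exact norm_sub_norm_le _ _
    calc ∑ i ∈ B, ‖θ - x i‖ - B.card * D
        = ∑ i ∈ B, (‖θ - x i‖ - D) := by
          rw [Finset.sum_sub_distrib, Finset.sum_const, nsmul_eq_mul]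
      _ ≤ ∑ i ∈ B, ‖θs - x i‖ := Finset.sum_le_sum h
  -- bound on Bᶜ (lower)
  have hCbound : (Bᶜ.card : ℝ) * (D - r) ≤ ∑ i ∈ Bᶜ, ‖θs - x i‖ := by
    have h : ∀ i ∈ Bᶜ, D - r ≤ ‖θs - x i‖ := by
      intro i hi
      have he : θ - θs = (θ - x i) - (θs - x i) := by abel
      have h2 : D ≤ ‖θ - x i‖ + ‖θs - x i‖ := by
        rw [hDdef, he]; exact norm_sub_le _ _
      have h3 : ‖θ - x i‖ ≤ r := Finset.le_sup' (fun i => ‖θ - x i‖) hi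
      linarith
    calc (Bᶜ.card : ℝ) * (D - r) = ∑ _i ∈ Bᶜ, (D - r) := by
          rw [Finset.sum_const, nsmul_eq_mul]
      _ ≤ ∑ i ∈ Bᶜ, ‖θs - x i‖ := Finset.sum_le_sum h
  -- bound on Bᶜ (upper)
  have hCup : ∑ i ∈ Bᶜ, ‖θ - x i‖ ≤ (Bᶜ.card : ℝ) * r := by
    calc ∑ i ∈ Bᶜ, ‖θ - x i‖ ≤ ∑ _i ∈ Bᶜ, r :=
          Finset.sum_le_sum fun i hi => Finset.le_sup' (fun i => ‖θ - x i‖) hi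
      _ = (Bᶜ.card : ℝ) * r := by rw [Finset.sum_const, nsmul_eq_mul]
  have hcard : (Bᶜ.card : ℝ) = (n : ℝ) - B.card := by
    have : Bᶜ.card = n - B.card := by
      rw [Finset.card_compl, Fintype.card_fin]
    have hle : B.card ≤ n := by simpa using Finset.card_le_univ B
    rw [this, Nat.cast_sub hle]
  have hpos : (0:ℝ) < (n : ℝ) - 2 * B.card := by
    have h : (2 * B.card : ℝ) < n := by exact_mod_cast hB
    linarith
  have key : ((n:ℝ) - 2 * B.card) * D ≤ (2 * (n:ℝ) - 2 * B.card) * r := by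
    rw [hsplit θ, hsplit θs] at h1
    rw [hcard] at hCbound hCup
    nlinarith [hBbound, hCbound, hCup, h1]
  rw [div_mul_eq_mul_div, le_div_iff₀ hpos]
  nlinarith [key]
end

section
/- Fix n ∈ ℕ and γ ∈ [1/2, 1], and set m = ⌈γn⌉. For a dataset X = (x₁,…,xₙ) in ℝ^d and fixed ν ≥ 0, define N_i(ν) = |{j : ‖x_j - xᵢ‖ ≤ ν}| and N(X; ν) = (1/m)·max over m-element subsets {i₁,…,i_m} ⊆ [n] of Σ_k N_{i_k}(ν). Then for any two datasets X, X′ of size n differing in one point, |N(X; ν) - N(X′; ν)| ≤ 3. -/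
open Finset

/-- The query `N(X; ν)` of the RadiusFinder algorithm has sensitivity at most 3. -/
theorem stmt_6 (d n : ℕ) (γ : ℝ) (hγ : γ ∈ Set.Icc (1/2 : ℝ) 1)
    (x x' : Fin n → EuclideanSpace ℝ (Fin d)) (ν : ℝ) (hν : 0 ≤ ν)
    (j : Fin n) (hneighbor : ∀ i, i ≠ j → x i = x' i)
    (N : (Fin n → EuclideanSpace ℝ (Fin d)) → ℝ)
    (hN : ∀ y : Fin n → EuclideanSpace ℝ (Fin d), N y =
      (((univ.powersetCard ⌈γ * n⌉₊).sup fun S =>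
          ∑ i ∈ S, (univ.filter fun k => ‖y k - y i‖ ≤ ν).card : ℕ) : ℝ) / (⌈γ * n⌉₊ : ℝ)) :
    |N x - N x'| ≤ 3 := by
  have hn : 0 < n := j.pos
  set m := ⌈γ * n⌉₊ with hm
  have hγ1 : (1/2 : ℝ) ≤ γ := hγ.1
  have hγ0 : (0 : ℝ) < γ := lt_of_lt_of_le (by norm_num) hγ1
  have hnR : (0 : ℝ) < (n : ℝ) := by exact_mod_cast hn
  have hmpos : 0 < m := Nat.ceil_pos.mpr (mul_pos hγ0 hnR)
  have hceil : (γ * n : ℝ) ≤ (m : ℝ) := Nat.le_ceil _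
  have h2m : n ≤ 2 * m := by
    have : (n : ℝ) ≤ 2 * (m : ℝ) := by nlinarith
    exact_mod_cast this
  have key : ∀ (y y' : Fin n → EuclideanSpace ℝ (Fin d)), (∀ i, i ≠ j → y i = y' i) →
      ((univ.powersetCard m).sup fun S =>
          ∑ i ∈ S, (univ.filter fun k => ‖y k - y i‖ ≤ ν).card)
      ≤ ((univ.powersetCard m).sup fun S =>
          ∑ i ∈ S, (univ.filter fun k => ‖y' k - y' i‖ ≤ ν).card) + 3 * m := by
    intro y y' h
    refine Finset.sup_le fun S hS => ?_
    have hcard : S.card = m := Finset.mem_powersetCard_univ.mp hS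
    have hstep : ∀ i ∈ S, (univ.filter fun k => ‖y k - y i‖ ≤ ν).card ≤
        (univ.filter fun k => ‖y' k - y' i‖ ≤ ν).card + (if i = j then n else 1) := by
      intro i _
      by_cases hij : i = j
      · subst hij
        rw [if_pos rfl]
        have h1 : (univ.filter fun k => ‖y k - y i‖ ≤ ν).card ≤ n := by
          simpa using Finset.card_filter_le (univ : Finset (Fin n)) _
        omega
      · simp only [if_neg hij]
        have hsub : (univ.filter fun k => ‖y k - y i‖ ≤ ν) ⊆
            insert j (univ.filter fun k => ‖y' k - y' i‖ ≤ ν) := by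
          intro k hk
          simp only [mem_filter, mem_univ, true_and] at hk
          by_cases hkj : k = j
          · exact hkj ▸ mem_insert_self _ _
          · refine mem_insert_of_mem ?_
            simp only [mem_filter, mem_univ, true_and]
            rw [← h k hkj, ← h i hij]
            exact hk
        calc (univ.filter fun k => ‖y k - y i‖ ≤ ν).card
            ≤ (insert j (univ.filter fun k => ‖y' k - y' i‖ ≤ ν)).card :=
              Finset.card_le_card hsub
          _ ≤ (univ.filter fun k => ‖y' k - y' i‖ ≤ ν).card + 1 :=
              Finset.card_insert_le _ _
    have hsum : ∑ i ∈ S, (univ.filter fun k => ‖y k - y i‖ ≤ ν).card ≤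
        ∑ i ∈ S, (univ.filter fun k => ‖y' k - y' i‖ ≤ ν).card + (n + m) := by
      calc ∑ i ∈ S, (univ.filter fun k => ‖y k - y i‖ ≤ ν).card
          ≤ ∑ i ∈ S, ((univ.filter fun k => ‖y' k - y' i‖ ≤ ν).card + (if i = j then n else 1)) :=
            Finset.sum_le_sum hstep
        _ = ∑ i ∈ S, (univ.filter fun k => ‖y' k - y' i‖ ≤ ν).card
            + ∑ i ∈ S, (if i = j then n else 1) := Finset.sum_add_distrib
        _ ≤ ∑ i ∈ S, (univ.filter fun k => ‖y' k - y' i‖ ≤ ν).card + (n + m) := by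
            gcongr
            calc ∑ i ∈ S, (if i = j then n else 1)
                ≤ ∑ i ∈ S, ((if i = j then n else 0) + 1) :=
                  Finset.sum_le_sum (by intro i _; split <;> omega)
              _ = (if j ∈ S then n else 0) + S.card := by
                  rw [Finset.sum_add_distrib, Finset.sum_ite_eq' S j (fun _ => n)]
                  simp
              _ ≤ n + m := by rw [hcard]; split <;> omega
    have hle : ∑ i ∈ S, (univ.filter fun k => ‖y' k - y' i‖ ≤ ν).card ≤
        (univ.powersetCard m).sup fun S =>
          ∑ i ∈ S, (univ.filter fun k => ‖y' k - y' i‖ ≤ ν).card :=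
      Finset.le_sup (f := fun S => ∑ i ∈ S, (univ.filter fun k => ‖y' k - y' i‖ ≤ ν).card) hS
    omega
  have hA := key x x' hneighbor
  have hB := key x' x (fun i hi => (hneighbor i hi).symm)
  rw [hN, hN, abs_sub_le_iff]
  have hmR : (0 : ℝ) < (m : ℝ) := by exact_mod_cast hmpos
  have hA' : (((univ.powersetCard m).sup fun S =>
      ∑ i ∈ S, (univ.filter fun k => ‖x k - x i‖ ≤ ν).card : ℕ) : ℝ) ≤
      (((univ.powersetCard m).sup fun S =>
      ∑ i ∈ S, (univ.filter fun k => ‖x' k - x' i‖ ≤ ν).card : ℕ) : ℝ) + 3 * m := by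
    exact_mod_cast hA
  have hB' : (((univ.powersetCard m).sup fun S =>
      ∑ i ∈ S, (univ.filter fun k => ‖x' k - x' i‖ ≤ ν).card : ℕ) : ℝ) ≤
      (((univ.powersetCard m).sup fun S =>
      ∑ i ∈ S, (univ.filter fun k => ‖x k - x i‖ ≤ ν).card : ℕ) : ℝ) + 3 * m := by
    exact_mod_cast hB
  constructor <;>
  · rw [div_sub_div_same, div_le_iff₀ hmR]
    linarith
end

section
/- Let θ, θ⋆, x ∈ ℝ^d and Δ ≥ 0 with ‖x - θ⋆‖ ≤ Δ and ‖θ - θ⋆‖ > Δ. Then the inner product ⟨(θ - x)/‖θ - x‖, (θ - θ⋆)/‖θ - θ⋆‖⟩ ≥ √(1 - (Δ/‖θ - θ⋆‖)²). -/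
open RealInnerProductSpace

/-- Geometric inner-product lower bound: if `‖x - θ⋆‖ ≤ Δ < ‖θ - θ⋆‖`, then the unit
vectors along `θ - x` and `θ - θ⋆` have inner product at least `√(1 - (Δ/‖θ-θ⋆‖)²)`. -/
theorem stmt_9 (d : ℕ) (θ θs x : EuclideanSpace ℝ (Fin d)) (Δ : ℝ) (hΔ : 0 ≤ Δ)
    (h1 : ‖x - θs‖ ≤ Δ) (h2 : Δ < ‖θ - θs‖) :
    Real.sqrt (1 - (Δ / ‖θ - θs‖) ^ 2) ≤
      ⟪‖θ - x‖⁻¹ • (θ - x), ‖θ - θs‖⁻¹ • (θ - θs)⟫ := by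
  set v := θ - θs with hv
  set u := θ - x with hu
  set w := x - θs with hw
  have huvw : u = v - w := by rw [hu, hv, hw]; abel
  have hR : 0 < ‖v‖ := lt_of_le_of_lt hΔ h2
  have hnw : ‖w‖ ≤ Δ := h1
  have hnw0 : 0 ≤ ‖w‖ := norm_nonneg w
  have hnu : 0 < ‖u‖ := by
    have h3 : ‖v‖ - ‖w‖ ≤ ‖u‖ := by rw [huvw]; exact norm_sub_norm_le v w
    linarith
  have hp : ⟪w, v⟫ ≤ ‖w‖ * ‖v‖ := real_inner_le_norm w v
  have hpc : |⟪w, v⟫| ≤ ‖w‖ * ‖v‖ := abs_real_inner_le_norm w v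
  have hc : ⟪u, v⟫ = ‖v‖ ^ 2 - ⟪w, v⟫ := by
    rw [huvw, inner_sub_left, real_inner_self_eq_norm_sq]
  have hun : ‖u‖ ^ 2 = ‖v‖ ^ 2 - 2 * ⟪w, v⟫ + ‖w‖ ^ 2 := by
    rw [huvw, @norm_sub_sq_real, real_inner_comm]
  have hcpos : 0 < ⟪u, v⟫ := by nlinarith
  have hW : ‖w‖ ^ 2 ≤ Δ ^ 2 := by nlinarith
  have key : ‖u‖ ^ 2 * (‖v‖ ^ 2 - Δ ^ 2) ≤ ⟪u, v⟫ ^ 2 := by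
    nlinarith [sq_nonneg (⟪w, v⟫ - ‖w‖ ^ 2),
      mul_nonneg (sq_nonneg ‖u‖) (sub_nonneg.2 hW)]
  rw [real_inner_smul_left, real_inner_smul_right]
  have hrhs : 0 ≤ ‖u‖⁻¹ * (‖v‖⁻¹ * ⟪u, v⟫) := by positivity
  have hsq : 1 - (Δ / ‖v‖) ^ 2 ≤ (‖u‖⁻¹ * (‖v‖⁻¹ * ⟪u, v⟫)) ^ 2 := by
    have heq : (‖u‖⁻¹ * (‖v‖⁻¹ * ⟪u, v⟫)) ^ 2 = ⟪u, v⟫ ^ 2 / (‖u‖ ^ 2 * ‖v‖ ^ 2) := by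
      rw [mul_pow, mul_pow, inv_pow, inv_pow]; ring
    rw [heq, le_div_iff₀ (by positivity)]
    have heq2 : (1 - (Δ / ‖v‖) ^ 2) * (‖u‖ ^ 2 * ‖v‖ ^ 2) = ‖u‖ ^ 2 * (‖v‖ ^ 2 - Δ ^ 2) := by
      field_simp
    rw [heq2]; exact key
  calc Real.sqrt (1 - (Δ / ‖v‖) ^ 2) ≤ Real.sqrt ((‖u‖⁻¹ * (‖v‖⁻¹ * ⟪u, v⟫)) ^ 2) :=
        Real.sqrt_le_sqrt hsq
    _ = ‖u‖⁻¹ * (‖v‖⁻¹ * ⟪u, v⟫) := Real.sqrt_sq hrhs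
end

section
/- Let X = (x₁,…,xₙ) ∈ (ℝ^d)^n with geometric median θ⋆ and F(θ) = Σᵢ ‖θ - xᵢ‖. Suppose θ ∈ ℝ^d satisfies ‖θ - θ⋆‖ > (4/√5)·Δ where Δ = Δ_{3n/4}(θ⋆) is the 3/4-quantile radius. Then F is not minimized at θ; more precisely, any subgradient g of F at θ satisfies ⟨g, (θ - θ⋆)/‖θ - θ⋆‖⟩ > 0. -/
open Finset RealInnerProductSpace

set_option maxHeartbeats 1000000 in
/-- If `θ` is farther than `(4/√5)·Δ_{3n/4}(θ⋆)` from the geometric median `θ⋆`, then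
every subgradient `g` of the geometric-median loss at `θ` has strictly positive inner
product with the unit vector pointing from `θ⋆` to `θ`; in particular `F` is not
minimized at `θ`. -/
theorem stmt_10 (d n : ℕ) (hn : 0 < n) (x : Fin n → EuclideanSpace ℝ (Fin d))
    (θs θ g : EuclideanSpace ℝ (Fin d))
    (hθs : IsMinOn (fun θ => ∑ i, ‖θ - x i‖) Set.univ θs)
    (Δ : ℝ)
    (hΔ : IsLeast {r : ℝ | 0 ≤ r ∧
        3 * (n : ℝ) / 4 ≤ ((univ.filter fun i => ‖x i - θs‖ ≤ r).card : ℝ)} Δ)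
    (hfar : (4 / Real.sqrt 5) * Δ < ‖θ - θs‖)
    (hg : ∀ y : EuclideanSpace ℝ (Fin d),
        (∑ i, ‖θ - x i‖) + ⟪g, y - θ⟫ ≤ ∑ i, ‖y - x i‖) :
    0 < ⟪g, ‖θ - θs‖⁻¹ • (θ - θs)⟫ := by
  set R : ℝ := ‖θ - θs‖ with hRdef
  have hΔ0 : 0 ≤ Δ := hΔ.1.1
  have hmcard : 3 * (n : ℝ) / 4 ≤
      ((univ.filter fun i => ‖x i - θs‖ ≤ Δ).card : ℝ) := hΔ.1.2
  have hs5 : (0:ℝ) < Real.sqrt 5 := Real.sqrt_pos.mpr (by norm_num)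
  have hR0 : 0 < R := lt_of_le_of_lt (by positivity) hfar
  have h1 : 4 * Δ < R * Real.sqrt 5 := by
    rw [div_mul_eq_mul_div] at hfar
    exact (div_lt_iff₀ hs5).mp hfar
  have hs94 : Real.sqrt 5 < 9/4 := by
    rw [show (9:ℝ)/4 = Real.sqrt ((9/4)^2) by rw [Real.sqrt_sq (by norm_num)]]
    exact Real.sqrt_lt_sqrt (by norm_num) (by norm_num)
  have hΔR : Δ ≤ 9/16 * R := by nlinarith
  have hΔltR : Δ < R := by linarith
  set u : EuclideanSpace ℝ (Fin d) := R⁻¹ • (θ - θs) with hudef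
  have hu : ‖u‖ = 1 := by
    rw [hudef, norm_smul, Real.norm_eq_abs, abs_inv, abs_of_pos hR0,
      inv_mul_cancel₀ hR0.ne']
  have hRu : R • u = θ - θs := by
    rw [hudef, smul_smul, mul_inv_cancel₀ hR0.ne', one_smul]
  have huθ : ⟪u, θ - θs⟫ = R := by
    rw [hudef, real_inner_smul_left, real_inner_self_eq_norm_sq, ← hRdef, sq]
    field_simp
  set t : ℝ := (R - Δ)^2 / (8 * (R + Δ)) with htdef
  have ht0 : 0 < t := div_pos (pow_pos (by linarith) 2) (by linarith)
  set y : EuclideanSpace ℝ (Fin d) := θ - t • u with hydef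
  clear_value R u t y
  -- per-point bound for points close to θs
  have hgood : ∀ i, ‖x i - θs‖ ≤ Δ → t/3 < ‖θ - x i‖ - ‖y - x i‖ := by
    intro i hi
    set w : EuclideanSpace ℝ (Fin d) := θs - x i with hwdef
    have hw : ‖w‖ ≤ Δ := by rwa [hwdef, norm_sub_rev]
    set v : EuclideanSpace ℝ (Fin d) := θ - x i with hvdef
    have hv : v = (θ - θs) + w := by rw [hvdef, hwdef]; abel
    set s : ℝ := ⟪u, w⟫ with hsdef
    have hsabs : |s| ≤ Δ := by
      calc |s| ≤ ‖u‖ * ‖w‖ := abs_real_inner_le_norm u w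
        _ = ‖w‖ := by rw [hu, one_mul]
        _ ≤ Δ := hw
    have hsl : -Δ ≤ s := neg_le_of_abs_le hsabs
    have hsu : s ≤ Δ := le_of_abs_le hsabs
    set c : ℝ := ⟪u, v⟫ with hcdef
    have hc : c = R + s := by rw [hcdef, hv, inner_add_right, huθ]
    set a : ℝ := ‖v‖ with hadef
    have hiw : ⟪θ - θs, w⟫ = R * s := by
      rw [← hRu, real_inner_smul_left, hsdef]
    have ha2 : a^2 = R^2 + 2*R*s + ‖w‖^2 := by
      rw [hadef, hv, norm_add_sq_real, hiw, ← hRdef]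
      ring
    have hw2 : ‖w‖^2 ≤ Δ^2 := by
      have := norm_nonneg w
      nlinarith
    have h18 : (0:ℝ) ≤ 16*R - 18*Δ := by linarith
    have hhint : (0:ℝ) ≤ (s + Δ) * (16*R - 18*Δ) :=
      mul_nonneg (by linarith) h18
    have hkey : 8*(R-Δ)^2 ≤ 9*c^2 - a^2 := by
      rw [hc, ha2]
      nlinarith [hhint, sq_nonneg (s + Δ), hw2]
    have hclb : R - Δ ≤ c := by rw [hc]; linarith
    have ha0 : 0 ≤ a := norm_nonneg v
    have hca : c ≤ a := by
      have h := real_inner_le_norm u v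
      rwa [hu, one_mul, ← hadef, ← hcdef] at h
    have haub : a ≤ R + Δ := by
      rw [hadef, hv]
      calc ‖(θ - θs) + w‖ ≤ ‖θ - θs‖ + ‖w‖ := norm_add_le _ _
        _ ≤ R + Δ := by rw [← hRdef]; linarith
    have h3ca : 0 ≤ 3*c - a := by nlinarith
    have h4ca : 3*c + a ≤ 4*(R+Δ) := by linarith
    have h16t : 16 * t ≤ 3*c - a := by
      rw [htdef, ← mul_div_assoc, div_le_iff₀ (by linarith : (0:ℝ) < 8*(R+Δ))]
      nlinarith [hkey, mul_le_mul_of_nonneg_left h4ca h3ca]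
    -- now the key computation
    have hyv : y - x i = v - t • u := by rw [hydef, hvdef]; abel
    set b : ℝ := ‖y - x i‖ with hbdef
    have hb0 : 0 ≤ b := norm_nonneg _
    have hb2 : b^2 = a^2 - 2*t*c + t^2 := by
      rw [hbdef, hyv, norm_sub_sq_real, real_inner_smul_right, ← hadef,
        norm_smul, Real.norm_eq_abs, abs_of_pos ht0, hu, mul_one]
      have hvu : ⟪v, u⟫ = c := by rw [hcdef]; exact real_inner_comm u v
      rw [hvu]
      ring
    have hXpos : 0 < a - t/3 := by linarith
    have hq : 0 < t * (3*c - a - (4/3)*t) := mul_pos ht0 (by linarith)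
    have hb2lt : b^2 < (a - t/3)^2 := by nlinarith [hq]
    have hblt : b < a - t/3 := lt_of_pow_lt_pow_left₀ 2 (le_of_lt hXpos) hb2lt
    show t/3 < ‖θ - x i‖ - ‖y - x i‖
    rw [← hvdef, ← hadef, ← hbdef]
    linarith
  -- per-point bound for all points
  have hbad : ∀ i : Fin n, -t ≤ ‖θ - x i‖ - ‖y - x i‖ := by
    intro i
    have h : y - x i = (θ - x i) - t • u := by rw [hydef]; abel
    have h2 : ‖y - x i‖ ≤ ‖θ - x i‖ + ‖t • u‖ := by
      rw [h]; exact norm_sub_le _ _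
    rw [norm_smul, Real.norm_eq_abs, abs_of_pos ht0, hu, mul_one] at h2
    linarith
  -- sum the bounds
  set S : Finset (Fin n) := univ.filter fun i => ‖x i - θs‖ ≤ Δ with hSdef
  clear_value S
  have hScard : 3 * (n : ℝ) / 4 ≤ (S.card : ℝ) := hmcard
  have hn1 : (1:ℝ) ≤ (n:ℝ) := by exact_mod_cast hn
  have hSpos : (0:ℝ) < (S.card : ℝ) := by linarith
  have hSne : S.Nonempty := Finset.card_pos.mp (by exact_mod_cast hSpos)
  have hsum : 0 < (∑ i, ‖θ - x i‖) - ∑ i, ‖y - x i‖ := by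
    have hsplit : (∑ i, (‖θ - x i‖ - ‖y - x i‖)) =
        (∑ i ∈ S, (‖θ - x i‖ - ‖y - x i‖)) +
        ∑ i ∈ univ.filter (fun i => ¬ ‖x i - θs‖ ≤ Δ), (‖θ - x i‖ - ‖y - x i‖) := by
      rw [hSdef, Finset.sum_filter_add_sum_filter_not]
    have hgsum : (S.card : ℝ) * (t/3) < ∑ i ∈ S, (‖θ - x i‖ - ‖y - x i‖) := by
      have := Finset.sum_lt_sum_of_nonempty hSne
        (f := fun _ => t/3) (g := fun i => ‖θ - x i‖ - ‖y - x i‖)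
        (fun i hiS => hgood i (by simpa [hSdef] using hiS))
      simpa [Finset.sum_const, nsmul_eq_mul] using this
    have hbsum : -(((univ.filter (fun i => ¬ ‖x i - θs‖ ≤ Δ)).card : ℝ) * t) ≤
        ∑ i ∈ univ.filter (fun i => ¬ ‖x i - θs‖ ≤ Δ), (‖θ - x i‖ - ‖y - x i‖) := by
      have := Finset.sum_le_sum
        (f := fun _ : Fin n => -t) (g := fun i => ‖θ - x i‖ - ‖y - x i‖)
        (fun i _ => hbad i) (s := univ.filter (fun i => ¬ ‖x i - θs‖ ≤ Δ))
      rw [Finset.sum_const, nsmul_eq_mul] at this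
      linarith
    have hcards : S.card + (univ.filter (fun i => ¬ ‖x i - θs‖ ≤ Δ)).card = n := by
      rw [hSdef, Finset.card_filter_add_card_filter_not]
      exact Finset.card_univ.trans (Fintype.card_fin n)
    have hcardsR : ((univ.filter (fun i => ¬ ‖x i - θs‖ ≤ Δ)).card : ℝ) =
        (n : ℝ) - (S.card : ℝ) := by
      push_cast [← hcards]
      ring
    rw [hcardsR] at hbsum
    have hmt : 0 ≤ t * ((S.card:ℝ)/3 - ((n:ℝ) - (S.card:ℝ))) :=
      mul_nonneg ht0.le (by linarith)
    have hpos : 0 < (∑ i, (‖θ - x i‖ - ‖y - x i‖)) := by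
      rw [hsplit]
      linarith [hgsum, hbsum, hmt]
    rwa [Finset.sum_sub_distrib] at hpos
  -- conclude via the subgradient inequality at y
  have hgy := hg y
  have hinner : ⟪g, y - θ⟫ = -(t * ⟪g, u⟫) := by
    rw [hydef, show θ - t • u - θ = -(t • u) by abel, inner_neg_right,
      real_inner_smul_right]
  rw [hinner] at hgy
  have hgu : 0 < ⟪g, u⟫ := by
    by_contra h
    push_neg at h
    linarith [hsum, mul_nonpos_of_nonneg_of_nonpos (le_of_lt ht0) h]
  exact hgu
end

section
/- Let X = (x₁,…,xₙ) and X̃ = (x₁,…,x_{n-1}, x′ₙ) be datasets in ℝ^d differing in the last point. Let θ⋆ be a geometric median of X and θ⊛ a geometric median of X̃, and assume Σ_{i=1}^{n-1} ∇‖θ⊛ - xᵢ‖ = -∇‖θ⊛ - x′ₙ‖ (first-order optimality with all gradients well-defined). Then Σ_{i=1}^{n-1}(‖θ⊛ - xᵢ‖ - ‖θ⋆ - xᵢ‖) ≤ ‖θ⊛ - θ⋆‖. -/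
open Finset RealInnerProductSpace

lemma norm_sub_le_inner_aux {E : Type*} [NormedAddCommGroup E] [InnerProductSpace ℝ E]
    (a b : E) (ha : a ≠ 0) : ‖a‖ - ‖b‖ ≤ ⟪‖a‖⁻¹ • a, a - b⟫ := by
  have hpos : (0:ℝ) < ‖a‖ := norm_pos_iff.mpr ha
  rw [inner_smul_left, inner_sub_right, real_inner_self_eq_norm_sq]
  have hcs : ⟪a, b⟫ ≤ ‖a‖ * ‖b‖ := real_inner_le_norm a b
  have : ‖a‖⁻¹ * (‖a‖ ^ 2 - ‖a‖ * ‖b‖) = ‖a‖ - ‖b‖ := by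
    field_simp
  calc ‖a‖ - ‖b‖ = ‖a‖⁻¹ * (‖a‖ ^ 2 - ‖a‖ * ‖b‖) := this.symm
    _ ≤ ‖a‖⁻¹ * (‖a‖ ^ 2 - ⟪a, b⟫) := by
        apply mul_le_mul_of_nonneg_left (by linarith) (by positivity)
    _ = (starRingEnd ℝ) ‖a‖⁻¹ * (‖a‖ ^ 2 - ⟪a, b⟫) := by simp

/-- Using first-order optimality of the geometric median `θ⊛` of the modified dataset,
the sum of the distance increments over the unchanged points is at most `‖θ⊛ - θ⋆‖`. -/
theorem stmt_11 (d n : ℕ)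
    (x : Fin n → EuclideanSpace ℝ (Fin d)) (x' : EuclideanSpace ℝ (Fin d))
    (θs θc : EuclideanSpace ℝ (Fin d))
    (hθs : IsMinOn (fun θ => ∑ i, ‖θ - x i‖) Set.univ θs)
    (hθc : IsMinOn (fun θ =>
        (∑ i : Fin (n - 1), ‖θ - x (Fin.castLE (Nat.sub_le n 1) i)‖) + ‖θ - x'‖)
      Set.univ θc)
    (hne : ∀ i : Fin (n - 1), θc ≠ x (Fin.castLE (Nat.sub_le n 1) i))
    (hne' : θc ≠ x')
    (hopt : (∑ i : Fin (n - 1),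
        ‖θc - x (Fin.castLE (Nat.sub_le n 1) i)‖⁻¹ • (θc - x (Fin.castLE (Nat.sub_le n 1) i)))
      = -(‖θc - x'‖⁻¹ • (θc - x'))) :
    (∑ i : Fin (n - 1),
        (‖θc - x (Fin.castLE (Nat.sub_le n 1) i)‖ - ‖θs - x (Fin.castLE (Nat.sub_le n 1) i)‖))
      ≤ ‖θc - θs‖ := by
  set y : Fin (n-1) → EuclideanSpace ℝ (Fin d) := fun i => x (Fin.castLE (Nat.sub_le n 1) i)
  have step : ∀ i : Fin (n-1), ‖θc - y i‖ - ‖θs - y i‖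
      ≤ ⟪‖θc - y i‖⁻¹ • (θc - y i), θc - θs⟫ := by
    intro i
    have h := norm_sub_le_inner_aux (θc - y i) (θs - y i) (sub_ne_zero.mpr (hne i))
    have : θc - y i - (θs - y i) = θc - θs := by abel
    rwa [this] at h
  calc (∑ i : Fin (n-1), (‖θc - y i‖ - ‖θs - y i‖))
      ≤ ∑ i : Fin (n-1), ⟪‖θc - y i‖⁻¹ • (θc - y i), θc - θs⟫ :=
        Finset.sum_le_sum fun i _ => step i
    _ = ⟪∑ i : Fin (n-1), ‖θc - y i‖⁻¹ • (θc - y i), θc - θs⟫ :=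
        (sum_inner _ _ _).symm
    _ = ⟪-(‖θc - x'‖⁻¹ • (θc - x')), θc - θs⟫ := by rw [hopt]
    _ ≤ ‖-(‖θc - x'‖⁻¹ • (θc - x'))‖ * ‖θc - θs‖ := real_inner_le_norm _ _
    _ ≤ 1 * ‖θc - θs‖ := by
        apply mul_le_mul_of_nonneg_right _ (norm_nonneg _)
        rw [norm_neg, norm_smul, norm_inv, norm_norm]
        exact le_of_eq (inv_mul_cancel₀ (norm_ne_zero_iff.mpr (sub_ne_zero.mpr hne')))
    _ = ‖θc - θs‖ := one_mul _
end

section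
/- Let X, X̃ ∈ (ℝ^d)^n be datasets differing in one point, with geometric medians θ⋆ and θ⊛ respectively, and let F(θ; X) = Σᵢ ‖θ - xᵢ‖. Then for every θ ∈ ℝ^d, [F(θ; X) - F(θ⋆; X)] - [F(θ; X̃) - F(θ⊛; X̃)] ≤ 2‖θ - θ⋆‖ + 2‖θ⋆ - θ⊛‖. -/
open Finset

/-- Sensitivity of the centered geometric-median loss: for neighboring datasets `X, X̃`
with geometric medians `θ⋆, θ⊛`, and any `θ`,
`[F(θ;X) - F(θ⋆;X)] - [F(θ;X̃) - F(θ⊛;X̃)] ≤ 2‖θ-θ⋆‖ + 2‖θ⋆-θ⊛‖`. -/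
theorem stmt_12 (d n : ℕ)
    (x xt : Fin n → EuclideanSpace ℝ (Fin d)) (j : Fin n)
    (hneighbor : ∀ i, i ≠ j → x i = xt i)
    (θs θc : EuclideanSpace ℝ (Fin d))
    (hθs : IsMinOn (fun θ => ∑ i, ‖θ - x i‖) Set.univ θs)
    (hθc : IsMinOn (fun θ => ∑ i, ‖θ - xt i‖) Set.univ θc)
    (θ : EuclideanSpace ℝ (Fin d)) :
    ((∑ i, ‖θ - x i‖) - ∑ i, ‖θs - x i‖) - ((∑ i, ‖θ - xt i‖) - ∑ i, ‖θc - xt i‖)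
      ≤ 2 * ‖θ - θs‖ + 2 * ‖θs - θc‖ := by
  have hsum : ∀ θ' : EuclideanSpace ℝ (Fin d),
      (∑ i, ‖θ' - x i‖) - (∑ i, ‖θ' - xt i‖) = ‖θ' - x j‖ - ‖θ' - xt j‖ := by
    intro θ'
    rw [← Finset.sum_sub_distrib]
    rw [Finset.sum_eq_single j]
    · intro b _ hb
      rw [hneighbor b hb]; ring
    · intro h; exact absurd (Finset.mem_univ j) h
  have hmin : ∑ i, ‖θc - xt i‖ ≤ ∑ i, ‖θs - xt i‖ :=
    hθc (Set.mem_univ θs)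
  have h1 : ‖θ - x j‖ - ‖θs - x j‖ ≤ ‖θ - θs‖ := by
    have := norm_sub_norm_le (θ - x j) (θs - x j)
    simpa using this.trans_eq (by congr 1; abel)
  have h2 : ‖θs - xt j‖ - ‖θ - xt j‖ ≤ ‖θ - θs‖ := by
    have := norm_sub_norm_le (θs - xt j) (θ - xt j)
    have e : θs - xt j - (θ - xt j) = -(θ - θs) := by abel
    rw [e, norm_neg] at this
    linarith
  have hA := hsum θ
  have hB := hsum θs
  nlinarith [norm_nonneg (θs - θc)]
end

section
/- Let Θ ⊆ ℝ^d be nonempty with diameter at most D, let X = (x₁,…,xₙ) ∈ (ℝ^d)^n with geometric median θ⋆ ∈ Θ, let F(θ) = Σᵢ ‖θ - xᵢ‖, and let 3·Δ_{3n/4}(θ⋆) + 2D ≤ Δ for some Δ > 0 and n ≥ 4. Let X̃ be a neighboring dataset (differing in one point) with geometric median θ⊛. Then for every θ ∈ Θ, |[F(θ; X) - F(θ⋆; X)] - [F(θ; X̃) - F(θ⊛; X̃)]| ≤ Δ. -/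
/-!
Write `F` and `F̃` for the two losses. They differ only in the `j`-th term, so `F - F̃` is
`2`-Lipschitz and it suffices to show `0 ≤ F̃ θs - F̃ θc ≤ 2 Δq`. The upper bound comes from the
first-order optimality of `θs` for `F`: in every unit direction `e` the cosines between `e` and the
`x i - θs` sum to at most `0`. If `θc` is at distance `t > Δq` from `θs`, each of the at least
`3n/4 - 1` shared points within `Δq` of `θs` is then farther from `θc` by at least `t - Δq`, which
outweighs what the remaining points can gain.
-/

open Finset Filter Topology
open scoped RealInnerProductSpace

section ApproachRate

variable {V : Type*} [NormedAddCommGroup V] [InnerProductSpace ℝ V]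

open Classical in
/-- `-approachRate e v` is the right derivative of `ε ↦ ‖ε • e - v‖` at `0` when `‖e‖ = 1`;
the value `-1` at `v = 0` is that derivative, not a junk value. -/
noncomputable def approachRate (e v : V) : ℝ := if v = 0 then -1 else ⟪v, e⟫ / ‖v‖

theorem approachRate_mul_norm (e v : V) : approachRate e v * ‖v‖ = ⟪v, e⟫ := by
  by_cases hv : v = 0 <;> simp [approachRate, hv]

theorem abs_approachRate_le_one {e : V} (he : ‖e‖ = 1) (v : V) : |approachRate e v| ≤ 1 := by
  by_cases hv : v = 0
  · simp [approachRate, hv]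
  · rw [approachRate, if_neg hv, abs_div, abs_norm, div_le_one (norm_pos_iff.2 hv)]
    simpa [he] using abs_real_inner_le_norm v e

/-- The last term is `0` when `v = 0`, since `x / 0 = 0`. The bound is `b ≤ (a² + b²) / (2a)`. -/
theorem norm_smul_sub_le {e : V} (he : ‖e‖ = 1) (v : V) {ε : ℝ} (hε : 0 ≤ ε) :
    ‖ε • e - v‖ ≤ ‖v‖ - ε * approachRate e v + ε ^ 2 / (2 * ‖v‖) := by
  by_cases hv : v = 0
  · simp [hv, approachRate, norm_smul, he, abs_of_nonneg hε]
  have hpos : 0 < ‖v‖ := norm_pos_iff.2 hv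
  have hsq : ‖ε • e - v‖ ^ 2 = ε ^ 2 - 2 * ε * (approachRate e v * ‖v‖) + ‖v‖ ^ 2 := by
    rw [norm_sub_sq_real, norm_smul, he, real_inner_smul_left, real_inner_comm,
      approachRate_mul_norm, Real.norm_eq_abs, mul_one, sq_abs]
    ring
  have hamgm : ‖ε • e - v‖ ≤ (‖v‖ ^ 2 + ‖ε • e - v‖ ^ 2) / (2 * ‖v‖) := by
    rw [le_div_iff₀ (by positivity)]
    nlinarith [sq_nonneg (‖v‖ - ‖ε • e - v‖)]
  calc ‖ε • e - v‖ ≤ (‖v‖ ^ 2 + ‖ε • e - v‖ ^ 2) / (2 * ‖v‖) := hamgm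
    _ = ‖v‖ - ε * approachRate e v + ε ^ 2 / (2 * ‖v‖) := by
      rw [hsq]; field_simp; ring

theorem norm_sub_norm_smul_sub_le_mul {e : V} (he : ‖e‖ = 1) (v : V) {t : ℝ} (ht : 0 ≤ t) :
    ‖v‖ - ‖t • e - v‖ ≤ t * approachRate e v := by
  by_cases hv : v = 0
  · simp [hv, approachRate, norm_smul, he, abs_of_nonneg ht]
  have hpos : 0 < ‖v‖ := norm_pos_iff.2 hv
  have hcs : ‖v‖ ^ 2 - t * ⟪v, e⟫ ≤ ‖v‖ * ‖t • e - v‖ := by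
    have := real_inner_le_norm v (v - t • e)
    rw [inner_sub_right, real_inner_self_eq_norm_sq, real_inner_smul_right, norm_sub_rev] at this
    exact this
  rw [← approachRate_mul_norm] at hcs
  nlinarith

theorem norm_sub_norm_smul_sub_le {e : V} (he : ‖e‖ = 1) (v : V) (t : ℝ) :
    ‖v‖ - ‖t • e - v‖ ≤ (1 + approachRate e v) * ‖v‖ - t := by
  have := real_inner_le_norm (t • e - v) e
  rw [inner_sub_left, real_inner_smul_left, real_inner_self_eq_norm_sq, he, ← approachRate_mul_norm,
    one_pow, mul_one] at this
  linarith

end ApproachRate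

section Neighbor

variable {E : Type*} [SeminormedAddCommGroup E] {ι : Type*} [Fintype ι]

theorem abs_norm_sub_sub_norm_sub_le (p q y : E) : |‖p - y‖ - ‖q - y‖| ≤ ‖p - q‖ := by
  simpa [dist_eq_norm] using abs_dist_sub_le p q y

theorem sum_norm_sub_eq_sum_erase_add [DecidableEq ι] {x xt : ι → E} {j : ι}
    (hx : ∀ i, i ≠ j → x i = xt i) (p : E) :
    ∑ i, ‖p - xt i‖ = ∑ i ∈ univ.erase j, ‖p - x i‖ + ‖p - xt j‖ := by
  rw [← sum_erase_add _ _ (mem_univ j)]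
  congr 1
  exact sum_congr rfl fun i hi => by rw [hx i (ne_of_mem_erase hi)]

end Neighbor

section GeometricMedian

variable {V : Type*} [NormedAddCommGroup V] [InnerProductSpace ℝ V] {ι : Type*} [Fintype ι]

theorem sum_approachRate_nonpos {x : ι → V} {θs : V}
    (hθs : IsMinOn (fun θ => ∑ i, ‖θ - x i‖) Set.univ θs) {e : V} (he : ‖e‖ = 1) :
    ∑ i, approachRate e (x i - θs) ≤ 0 := by
  set C := ∑ i, 1 / (2 * ‖x i - θs‖)
  have hsmall : ∀ ε > 0, ∑ i, approachRate e (x i - θs) ≤ ε * C := by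
    intro ε hε
    have hmin : ∑ i, ‖θs - x i‖ ≤ ∑ i, ‖(θs + ε • e) - x i‖ := hθs (Set.mem_univ _)
    have hstep : ∑ i, ‖(θs + ε • e) - x i‖
        ≤ ∑ i, (‖x i - θs‖ - ε * approachRate e (x i - θs) + ε ^ 2 * (1 / (2 * ‖x i - θs‖))) := by
      refine sum_le_sum fun i _ => ?_
      rw [show θs + ε • e - x i = ε • e - (x i - θs) by abel, mul_one_div]
      exact norm_smul_sub_le he _ hε.le
    simp only [sum_add_distrib, sum_sub_distrib, ← mul_sum] at hstep
    simp only [norm_sub_rev θs] at hmin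
    nlinarith
  have hlim : Tendsto (fun ε => ε * C) (𝓝[>] 0) (𝓝 0) := by
    simpa using (tendsto_id.mul_const C).mono_left (nhdsWithin_le_nhds (a := (0 : ℝ)))
  exact ge_of_tendsto hlim (eventually_nhdsWithin_of_forall hsmall)

theorem sum_ite_neg_one_one (p : ι → Prop) [DecidablePred p] :
    ∑ i, (if p i then (-1 : ℝ) else 1) = Fintype.card ι - 2 * #{i | p i} := by
  have h : (#{i | p i} + #{i | ¬p i} : ℝ) = Fintype.card ι := by
    exact_mod_cast card_filter_add_card_filter_not (s := univ) p
  rw [sum_ite, sum_const, sum_const, nsmul_eq_mul, nsmul_eq_mul]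
  linarith

/-- Each summand is at most `r * approachRate e (y i) ∓ (t - r)`, with `-` for the points within
`r`; those are a majority even without `j`, and the rates sum to at most `0`. -/
theorem sum_erase_norm_sub_norm_smul_sub_le [DecidableEq ι] {y : ι → V} {e : V} (he : ‖e‖ = 1)
    (hy : ∑ i, approachRate e (y i) ≤ 0) {r t : ℝ} (hr : 0 ≤ r) (hrt : r ≤ t)
    (hcard : Fintype.card ι + 2 ≤ 2 * #{i | ‖y i‖ ≤ r}) (j : ι) :
    ∑ i ∈ univ.erase j, (‖y i‖ - ‖t • e - y i‖) ≤ 2 * r - t := by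
  set w : ι → ℝ := fun i => r * approachRate e (y i) + (t - r) * if ‖y i‖ ≤ r then -1 else 1
  have hrate : ∀ i, -1 ≤ approachRate e (y i) ∧ approachRate e (y i) ≤ 1 :=
    fun i => abs_le.1 (abs_approachRate_le_one he (y i))
  have hbound : ∀ i, ‖y i‖ - ‖t • e - y i‖ ≤ w i := by
    intro i
    simp only [w]
    split_ifs with hnear
    · have := norm_sub_norm_smul_sub_le he (y i) t
      have := mul_le_mul_of_nonneg_left hnear (by linarith [hrate i] : 0 ≤ 1 + approachRate e (y i))
      linarith
    · have := norm_sub_norm_smul_sub_le_mul he (y i) (hr.trans hrt)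
      nlinarith [hrate i]
  have hsum : ∑ i, w i ≤ -2 * (t - r) := by
    have hcard' : (Fintype.card ι : ℝ) + 2 ≤ 2 * #{i | ‖y i‖ ≤ r} := by exact_mod_cast hcard
    simp only [w, sum_add_distrib, ← mul_sum, sum_ite_neg_one_one]
    nlinarith
  have hwj : -t ≤ w j := by
    simp only [w]
    split_ifs <;> nlinarith [hrate j]
  calc ∑ i ∈ univ.erase j, (‖y i‖ - ‖t • e - y i‖) ≤ ∑ i ∈ univ.erase j, w i :=
        sum_le_sum fun i _ => hbound i
    _ = ∑ i, w i - w j := sum_erase_eq_sub (mem_univ j)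
    _ ≤ 2 * r - t := by linarith

theorem sum_erase_norm_sub_le_of_isMinOn [DecidableEq ι] {x : ι → V} {θs : V}
    (hθs : IsMinOn (fun θ => ∑ i, ‖θ - x i‖) Set.univ θs) {r : ℝ} (hr : 0 ≤ r)
    (hcard : Fintype.card ι + 2 ≤ 2 * #{i | ‖x i - θs‖ ≤ r}) (j : ι) (θ : V) :
    ∑ i ∈ univ.erase j, (‖θs - x i‖ - ‖θ - x i‖) ≤ 2 * r - ‖θ - θs‖ := by
  set t := ‖θ - θs‖
  rcases le_or_gt t r with hnear | hfar
  · have hall : ∑ i, (‖θs - x i‖ - ‖θ - x i‖) ≤ 0 := by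
      rw [sum_sub_distrib]
      exact sub_nonpos.2 (hθs (Set.mem_univ θ))
    have hj := (abs_le.1 (abs_norm_sub_sub_norm_sub_le θ θs (x j))).2
    rw [sum_erase_eq_sub (mem_univ j)]
    linarith
  · have ht : 0 < t := hr.trans_lt hfar
    set e := t⁻¹ • (θ - θs)
    have he : ‖e‖ = 1 := by
      rw [norm_smul, norm_inv, Real.norm_of_nonneg ht.le, inv_mul_cancel₀ ht.ne']
    have hθ : θ - θs = t • e := by rw [smul_smul, mul_inv_cancel₀ ht.ne', one_smul]
    have := sum_erase_norm_sub_norm_smul_sub_le he (sum_approachRate_nonpos hθs he) hr hfar.le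
      hcard j
    convert this using 3 with i
    · exact norm_sub_rev _ _
    · rw [← hθ, sub_sub_sub_cancel_right]

theorem sum_norm_sub_le_add_of_neighbor [DecidableEq ι] {x xt : ι → V} {j : ι}
    (hx : ∀ i, i ≠ j → x i = xt i) {θs : V}
    (hθs : IsMinOn (fun θ => ∑ i, ‖θ - x i‖) Set.univ θs) {r : ℝ} (hr : 0 ≤ r)
    (hcard : Fintype.card ι + 2 ≤ 2 * #{i | ‖x i - θs‖ ≤ r}) (θ : V) :
    ∑ i, ‖θs - xt i‖ ≤ ∑ i, ‖θ - xt i‖ + 2 * r := by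
  have hrest := sum_erase_norm_sub_le_of_isMinOn hθs hr hcard j θ
  have hj := (abs_le.1 (abs_norm_sub_sub_norm_sub_le θs θ (xt j))).2
  rw [sum_sub_distrib] at hrest
  rw [norm_sub_rev θs θ] at hj
  rw [sum_norm_sub_eq_sum_erase_add hx, sum_norm_sub_eq_sum_erase_add hx]
  linarith

end GeometricMedian

theorem stmt_14_general (d n : ℕ) (hn : 4 ≤ n)
    (Θ : Set (EuclideanSpace ℝ (Fin d)))
    (D : ℝ) (hD : ∀ u ∈ Θ, ∀ v ∈ Θ, ‖u - v‖ ≤ D)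
    (x xt : Fin n → EuclideanSpace ℝ (Fin d)) (j : Fin n)
    (hneighbor : ∀ i, i ≠ j → x i = xt i)
    (θs θc : EuclideanSpace ℝ (Fin d)) (hθsΘ : θs ∈ Θ)
    (hθs : IsMinOn (fun θ => ∑ i, ‖θ - x i‖) Set.univ θs)
    (hθc : IsMinOn (fun θ => ∑ i, ‖θ - xt i‖) Set.univ θc)
    (Δq Δ : ℝ)
    (hΔq : IsLeast {r : ℝ | 0 ≤ r ∧
        3 * (n : ℝ) / 4 ≤ ((univ.filter fun i => ‖x i - θs‖ ≤ r).card : ℝ)} Δq)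
    (hΔge : 3 * Δq + 2 * D ≤ Δ) :
    ∀ θ ∈ Θ,
      |((∑ i, ‖θ - x i‖) - ∑ i, ‖θs - x i‖) - ((∑ i, ‖θ - xt i‖) - ∑ i, ‖θc - xt i‖)|
        ≤ Δ := by
  intro θ hθ
  obtain ⟨⟨hΔq₀, hquantile⟩, -⟩ := hΔq
  have hcard : Fintype.card (Fin n) + 2 ≤ 2 * #{i | ‖x i - θs‖ ≤ Δq} := by
    have : (4 : ℝ) ≤ n := by exact_mod_cast hn
    rw [Fintype.card_fin]
    exact_mod_cast (by linarith : (n : ℝ) + 2 ≤ 2 * #{i | ‖x i - θs‖ ≤ Δq})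
  have hgap := sum_norm_sub_le_add_of_neighbor hneighbor hθs hΔq₀ hcard θc
  have hθc_le : ∑ i, ‖θc - xt i‖ ≤ ∑ i, ‖θs - xt i‖ := hθc (Set.mem_univ θs)
  have hjump : ∀ p, ∑ i, ‖p - x i‖ - ∑ i, ‖p - xt i‖ = ‖p - x j‖ - ‖p - xt j‖ := fun p => by
    rw [sum_norm_sub_eq_sum_erase_add hneighbor, ← sum_erase_add _ _ (mem_univ j)]
    ring
  have hj := abs_le.1 (abs_norm_sub_sub_norm_sub_le θ θs (x j))
  have hjt := abs_le.1 (abs_norm_sub_sub_norm_sub_le θ θs (xt j))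
  have hdiam := hD θ hθ θs hθsΘ
  rw [abs_le]
  constructor <;> linarith [hjump θ, hjump θs]

/-- Two-sided sensitivity bound for the centered geometric-median loss over a set `Θ`
of diameter at most `D`: if `3·Δ_{3n/4}(θ⋆) + 2D ≤ Δ` and `n ≥ 4`, then for neighboring
datasets the centered losses differ by at most `Δ` at every `θ ∈ Θ`. -/
theorem stmt_14 (d n : ℕ) (hn : 4 ≤ n)
    (Θ : Set (EuclideanSpace ℝ (Fin d))) (hΘ : Θ.Nonempty)
    (D : ℝ) (hD : ∀ u ∈ Θ, ∀ v ∈ Θ, ‖u - v‖ ≤ D)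
    (x xt : Fin n → EuclideanSpace ℝ (Fin d)) (j : Fin n)
    (hneighbor : ∀ i, i ≠ j → x i = xt i)
    (θs θc : EuclideanSpace ℝ (Fin d)) (hθsΘ : θs ∈ Θ)
    (hθs : IsMinOn (fun θ => ∑ i, ‖θ - x i‖) Set.univ θs)
    (hθc : IsMinOn (fun θ => ∑ i, ‖θ - xt i‖) Set.univ θc)
    (Δq Δ : ℝ)
    (hΔq : IsLeast {r : ℝ | 0 ≤ r ∧
        3 * (n : ℝ) / 4 ≤ ((univ.filter fun i => ‖x i - θs‖ ≤ r).card : ℝ)} Δq)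
    (hΔ : 0 < Δ) (hΔge : 3 * Δq + 2 * D ≤ Δ) :
    ∀ θ ∈ Θ,
      |((∑ i, ‖θ - x i‖) - ∑ i, ‖θs - x i‖) - ((∑ i, ‖θ - xt i‖) - ∑ i, ‖θc - xt i‖)|
        ≤ Δ :=
  stmt_14_general d n hn Θ D hD x xt j hneighbor θs θc hθsΘ hθs hθc Δq Δ hΔq hΔge
end

section
/- Let k ∈ ℕ, ε > 0, Δ > 0, and let s₁,…,s_k ∈ ℝ with OPT = minᵢ sᵢ. Let π be the probability distribution on [k] with π(i) ∝ exp(-ε·sᵢ/(2Δ)). Then for every β ∈ (0,1], the probability under π that s_î ≤ OPT + (2Δ/ε)·log(k/β) is at least 1 - β. -/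
open Finset

/-!
Write `w i = exp (-(ε sᵢ) / T)` (here `T = 2Δ`) and `Z = ∑ w`. A candidate whose score exceeds
`OPT + (T/ε) log(k/β)` has weight at most `(β/k) exp (-(ε OPT) / T) ≤ (β/k) Z`, because the
minimiser alone contributes `exp (-(ε OPT) / T)` to `Z`. There are at most `k` such candidates,
so together they carry probability at most `β`.
-/

theorem one_sub_le_sum_filter_div_sum {ι : Type*} [Fintype ι] (w : ι → ℝ) (P : ι → Prop)
    [DecidablePred P] {β : ℝ} (hβ : 0 ≤ β) (hZ : 0 < ∑ j, w j)
    (hbad : ∀ i, ¬ P i → w i ≤ β / Fintype.card ι * ∑ j, w j) :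
    1 - β ≤ (∑ i ∈ univ.filter P, w i) / ∑ j, w j := by
  set Z := ∑ j, w j
  have hcard : (Fintype.card ι : ℝ) ≠ 0 :=
    Nat.cast_ne_zero.mpr (nonempty_of_sum_ne_zero hZ.ne').card_pos.ne'
  have hbad_sum : ∑ i ∈ univ.filter (¬ P ·), w i ≤ β * Z :=
    calc ∑ i ∈ univ.filter (¬ P ·), w i
        ≤ #(univ.filter (¬ P ·)) • (β / Fintype.card ι * Z) :=
          sum_le_card_nsmul _ _ _ fun i hi => hbad i (mem_filter.mp hi).2
      _ ≤ Fintype.card ι • (β / Fintype.card ι * Z) := by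
          gcongr
          exact card_filter_le _ _
      _ = β * Z := by rw [nsmul_eq_mul]; field_simp
  have hsplit := sum_filter_add_sum_filter_not univ P w
  rw [le_div_iff₀ hZ]
  linarith

theorem exp_neg_mul_div_le_of_lt {ε T β k m x : ℝ} (hε : 0 < ε) (hT : 0 < T) (hβ : 0 < β)
    (hk : 0 < k) (hx : m + T / ε * Real.log (k / β) < x) :
    Real.exp (-(ε * x) / T) ≤ β / k * Real.exp (-(ε * m) / T) := by
  have hexponent : -(ε * x) / T ≤ Real.log (β / k) + -(ε * m) / T := by
    have hlog : Real.log (β / k) = -Real.log (k / β) := by rw [← Real.log_inv, inv_div]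
    have hx' : ε * m + T * Real.log (k / β) < ε * x := by
      have := mul_lt_mul_of_pos_left hx hε
      rwa [mul_add, ← mul_assoc, mul_div_cancel₀ _ hε.ne'] at this
    rw [hlog, div_le_iff₀ hT, add_mul, div_mul_cancel₀ _ hT.ne']
    linarith
  calc Real.exp (-(ε * x) / T) ≤ Real.exp (Real.log (β / k) + -(ε * m) / T) :=
        Real.exp_le_exp.mpr hexponent
    _ = β / k * Real.exp (-(ε * m) / T) := by
        rw [Real.exp_add, Real.exp_log (div_pos hβ hk)]

theorem one_sub_le_expMech_prob_near_opt {ι : Type*} [Fintype ι] [Nonempty ι] (s : ι → ℝ)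
    {ε T β : ℝ} (hε : 0 < ε) (hT : 0 < T) (hβ : 0 < β) :
    1 - β ≤ (∑ i ∈ univ.filter
        (fun i => s i ≤ (⨅ j, s j) + T / ε * Real.log (Fintype.card ι / β)),
      Real.exp (-(ε * s i) / T)) / ∑ j, Real.exp (-(ε * s j) / T) := by
  obtain ⟨i₀, hi₀⟩ := exists_eq_ciInf_of_finite (f := s)
  have hopt_le : Real.exp (-(ε * ⨅ j, s j) / T) ≤ ∑ j, Real.exp (-(ε * s j) / T) :=
    hi₀ ▸ single_le_sum (f := fun j => Real.exp (-(ε * s j) / T))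
      (fun j _ => (Real.exp_pos _).le) (mem_univ i₀)
  refine one_sub_le_sum_filter_div_sum _ _ hβ.le
    (sum_pos (fun j _ => Real.exp_pos _) univ_nonempty) fun i hi => ?_
  have hcard : (0 : ℝ) < Fintype.card ι := Nat.cast_pos.mpr Fintype.card_pos
  exact (exp_neg_mul_div_le_of_lt hε hT hβ hcard (not_le.mp hi)).trans
    (mul_le_mul_of_nonneg_left hopt_le (div_pos hβ hcard).le)

/-- Utility of the exponential mechanism: with probability at least `1 - β`, the sampled
candidate's score is within `(2Δ/ε)·log(k/β)` of the optimum. -/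
theorem stmt_16 (k : ℕ) (hk : 0 < k) (ε Δ β : ℝ) (hε : 0 < ε) (hΔ : 0 < Δ)
    (hβ : β ∈ Set.Ioc (0 : ℝ) 1) (s : Fin k → ℝ) :
    1 - β ≤ ∑ i ∈ univ.filter (fun i : Fin k =>
        s i ≤ (⨅ j : Fin k, s j) + (2 * Δ / ε) * Real.log (k / β)),
      Real.exp (-(ε * s i) / (2 * Δ)) / ∑ j, Real.exp (-(ε * s j) / (2 * Δ)) := by
  have : Nonempty (Fin k) := ⟨⟨0, hk⟩⟩
  rw [← sum_div]
  simpa using one_sub_le_expMech_prob_near_opt s hε (by positivity : 0 < 2 * Δ) hβ.1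
end

section
/- Let k ∈ ℕ, ε > 0, Δ > 0, and let s, s′ : [k] → ℝ satisfy |s(i) - s′(i)| ≤ Δ for all i. Define probability distributions π(i) ∝ exp(-ε·s(i)/(2Δ)) and π′(i) ∝ exp(-ε·s′(i)/(2Δ)) on [k]. Then for every i, exp(-ε)·π′(i) ≤ π(i) ≤ exp(ε)·π′(i). -/
open Finset

private lemma aux_17 (k : ℕ) (ε Δ : ℝ) (hε : 0 < ε) (hΔ : 0 < Δ)
    (s s' : Fin k → ℝ) (hs : ∀ i, |s i - s' i| ≤ Δ) (i : Fin k) :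
    Real.exp (-(ε * s i) / (2 * Δ)) / ∑ j, Real.exp (-(ε * s j) / (2 * Δ))
      ≤ Real.exp ε *
        (Real.exp (-(ε * s' i) / (2 * Δ)) / ∑ j, Real.exp (-(ε * s' j) / (2 * Δ))) := by
  have h2Δ : 0 < 2 * Δ := by linarith
  have expo : ∀ a b : ℝ, b - a ≤ Δ → -(ε * a) / (2 * Δ) ≤ ε / 2 + -(ε * b) / (2 * Δ) := by
    intro a b hab
    rw [← sub_le_iff_le_add, div_sub_div_same, div_le_iff₀ h2Δ]
    nlinarith
  have key : ∀ j, Real.exp (-(ε * s j) / (2 * Δ))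
      ≤ Real.exp (ε / 2) * Real.exp (-(ε * s' j) / (2 * Δ)) := by
    intro j
    rw [← Real.exp_add]
    exact Real.exp_le_exp.2 (expo (s j) (s' j) (by have := (abs_le.1 (hs j)).1; linarith))
  have hS'pos : (0:ℝ) < ∑ j, Real.exp (-(ε * s' j) / (2 * Δ)) := by
    apply Finset.sum_pos (fun j _ => Real.exp_pos _) ⟨i, Finset.mem_univ i⟩
  have hSlow : Real.exp (-(ε/2)) * ∑ j, Real.exp (-(ε * s' j) / (2 * Δ))
      ≤ ∑ j, Real.exp (-(ε * s j) / (2 * Δ)) := by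
    rw [Finset.mul_sum]
    apply Finset.sum_le_sum
    intro j _
    rw [← Real.exp_add]
    apply Real.exp_le_exp.2
    have := expo (s' j) (s j) (abs_le.1 (hs j)).2
    linarith
  calc Real.exp (-(ε * s i) / (2 * Δ)) / ∑ j, Real.exp (-(ε * s j) / (2 * Δ))
      ≤ (Real.exp (ε / 2) * Real.exp (-(ε * s' i) / (2 * Δ))) /
        (Real.exp (-(ε/2)) * ∑ j, Real.exp (-(ε * s' j) / (2 * Δ))) := by
        apply div_le_div₀ (by positivity) (key i) (by positivity) hSlow
    _ = Real.exp ε *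
        (Real.exp (-(ε * s' i) / (2 * Δ)) / ∑ j, Real.exp (-(ε * s' j) / (2 * Δ))) := by
        rw [mul_div_mul_comm, ← Real.exp_sub, show ε/2 - -(ε/2) = ε by ring]

/-- Privacy of the exponential mechanism: if two score functions differ pointwise by at
most `Δ`, the induced distributions are within a multiplicative factor `e^ε`. -/
theorem stmt_17 (k : ℕ) (ε Δ : ℝ) (hε : 0 < ε) (hΔ : 0 < Δ)
    (s s' : Fin k → ℝ) (hs : ∀ i, |s i - s' i| ≤ Δ) (i : Fin k) :
    Real.exp (-ε) *
        (Real.exp (-(ε * s' i) / (2 * Δ)) / ∑ j, Real.exp (-(ε * s' j) / (2 * Δ)))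
      ≤ Real.exp (-(ε * s i) / (2 * Δ)) / ∑ j, Real.exp (-(ε * s j) / (2 * Δ)) ∧
    Real.exp (-(ε * s i) / (2 * Δ)) / ∑ j, Real.exp (-(ε * s j) / (2 * Δ))
      ≤ Real.exp ε *
        (Real.exp (-(ε * s' i) / (2 * Δ)) / ∑ j, Real.exp (-(ε * s' j) / (2 * Δ))) := by
  refine ⟨?_, aux_17 k ε Δ hε hΔ s s' hs i⟩
  have h := aux_17 k ε Δ hε hΔ s' s (fun j => by rw [abs_sub_comm]; exact hs j) i
  rw [Real.exp_neg, inv_mul_le_iff₀ (Real.exp_pos ε)]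
  exact h
end
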